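/- Let α be a real number with 0 < α < 1/3. There exist a constant C > 0 and an integer N such that for every integer n ≥ N for which j = αn is an even positive integer, and for every integer w with 0 ≤ w ≤ n, one has K_j(w) ≥ −C · (e·(1+√2)·√((1−α)/α))^{αn}. -/

import Mathlib

/-!
`K_j(w)` is the coefficient of `X^j` in `f = (1 - X)^w (1 + X)^(n - w)`, and for even `j` it is
unchanged under `w ↦ n - w`, so we may assume `s = n - 2w ≥ 0`. The polynomial `f` solves
`(1 - X²) f' = (s - n X) f`, whose three-term recurrence keeps the coefficients up to `X^j`
nonnegative once `s² ≥ 4 (j - 1)(n - j + 2)`. Otherwise `s` is small: writing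
`f = (1 - X²)^w (1 + X)^s`, its coefficients are dominated in absolute value by those of
`(1 + X²)^w (1 + X)^s`, so `|K_j(w)| ≤ e^{w r² + s r} / r^j` for every `r > 0`. At
`r = (√2 - 1) √(α / (1 - α))` the exponent is at most `j + 1`, which gives
`K_j(w) ≥ -e (e / r)^j` with `1 / r = (1 + √2) √((1 - α) / α)`.
-/

/-- The binary Krawtchouk polynomial `K_j` with parameter `n`, as a real
function. -/
noncomputable def krawF (n j : ℕ) (x : ℝ) : ℝ :=
  ∑ i ∈ Finset.range (j + 1),
    (-1 : ℝ) ^ i * ((descPochhammer ℝ i).eval x / (i.factorial : ℝ)) *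
      ((descPochhammer ℝ (j - i)).eval ((n : ℝ) - x) / ((j - i).factorial : ℝ))

open Polynomial

section

variable {R : Type*} [CommRing R] [LinearOrder R] [IsStrictOrderedRing R]

def CoeffDominated (p q : R[X]) : Prop := ∀ i, |p.coeff i| ≤ q.coeff i

namespace CoeffDominated

theorem coeff_nonneg {p q : R[X]} (h : CoeffDominated p q) (i : ℕ) : 0 ≤ q.coeff i :=
  (abs_nonneg _).trans (h i)

theorem refl_of_coeff_nonneg {q : R[X]} (hq : ∀ i, 0 ≤ q.coeff i) : CoeffDominated q q :=
  fun i => (abs_of_nonneg (hq i)).le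

theorem mul {p₁ q₁ p₂ q₂ : R[X]} (h₁ : CoeffDominated p₁ q₁) (h₂ : CoeffDominated p₂ q₂) :
    CoeffDominated (p₁ * p₂) (q₁ * q₂) := by
  intro i
  rw [coeff_mul, coeff_mul]
  refine (Finset.abs_sum_le_sum_abs _ _).trans (Finset.sum_le_sum fun x _ => ?_)
  rw [abs_mul]
  exact mul_le_mul (h₁ _) (h₂ _) (abs_nonneg _) (h₁.coeff_nonneg _)

theorem pow {p q : R[X]} (h : CoeffDominated p q) (n : ℕ) : CoeffDominated (p ^ n) (q ^ n) := by
  induction n with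
  | zero => exact refl_of_coeff_nonneg fun i => by rw [pow_zero, coeff_one]; split_ifs <;> simp
  | succ n ih => rw [pow_succ, pow_succ]; exact ih.mul h

theorem abs_coeff_mul_pow_le_eval {p q : R[X]} (h : CoeffDominated p q) (j : ℕ) {r : R}
    (hr : 0 ≤ r) : |p.coeff j| * r ^ j ≤ q.eval r := by
  rw [eval_eq_sum_range' (n := max q.natDegree j + 1) (by omega)]
  calc |p.coeff j| * r ^ j ≤ q.coeff j * r ^ j := by gcongr; exact h j
    _ ≤ _ := Finset.single_le_sum (f := fun i => q.coeff i * r ^ i)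
        (fun i _ => mul_nonneg (h.coeff_nonneg i) (pow_nonneg hr i))
        (Finset.mem_range.2 (by omega))

end CoeffDominated

end

theorem coeff_comp_neg_X {R : Type*} [CommRing R] (p : R[X]) (i : ℕ) :
    (p.comp (-X)).coeff i = (-1) ^ i * p.coeff i := by
  induction p using Polynomial.induction_on' with
  | add p q hp hq => rw [add_comp, coeff_add, coeff_add, hp, hq, mul_add]
  | monomial n a =>
    rw [← C_mul_X_pow_eq_monomial, mul_comp, C_comp, X_pow_comp, neg_pow,
      show (-1 : R[X]) ^ n = C ((-1) ^ n) by simp, ← mul_assoc, ← C_mul, coeff_C_mul_X_pow,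
      coeff_C_mul_X_pow]
    split_ifs with h
    · subst h; ring
    · simp

theorem mul_derivative_pow {R : Type*} [CommSemiring R] (p : R[X]) (n : ℕ) :
    p * derivative (p ^ n) = C (n : R) * p ^ n * derivative p := by
  cases n with
  | zero => simp
  | succ m => rw [derivative_pow_succ, pow_succ]; push_cast; ring

section Recurrence

variable {R : Type*} [CommRing R] {p : R[X]} {s ν : R}

theorem coeff_one_eq_of_ode (h : (1 - X ^ 2) * derivative p = (C s - C ν * X) * p) :
    p.coeff 1 = s * p.coeff 0 := by
  have := congrArg (coeff · 0) h
  simpa [sub_mul, coeff_derivative, coeff_X_pow_mul', coeff_C_mul, coeff_mul_X] using this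

theorem coeff_add_two_of_ode (h : (1 - X ^ 2) * derivative p = (C s - C ν * X) * p) (i : ℕ) :
    ((i : R) + 2) * p.coeff (i + 2) = s * p.coeff (i + 1) - (ν - i) * p.coeff i := by
  have := congrArg (coeff · (i + 1)) h
  have hX : (X ^ 2 * derivative p).coeff (i + 1) = i * p.coeff i := by
    cases i with
    | zero => simp [coeff_X_pow_mul']
    | succ k =>
      rw [show k + 1 + 1 = k + 2 by ring, coeff_X_pow_mul, coeff_derivative]; push_cast; ring
  simp only [sub_mul, one_mul, coeff_sub, hX, coeff_derivative, coeff_C_mul, mul_assoc,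
    coeff_X_mul] at this
  push_cast at this
  linear_combination this

end Recurrence

theorem nonneg_of_recurrence {a : ℕ → ℝ} {s ν : ℝ} {j : ℕ} (hs : 0 ≤ s) (ha₀ : 0 ≤ a 0)
    (ha₁ : a 1 = s * a 0)
    (hrec : ∀ i : ℕ, ((i : ℝ) + 2) * a (i + 2) = s * a (i + 1) - (ν - i) * a i)
    (hsq : ∀ k < j, 4 * (k : ℝ) * (ν + 1 - k) ≤ s ^ 2) : 0 ≤ a j := by
  -- the invariant bounds the subtracted term `(ν - i) a i` by half of `s a (i + 1)`
  have invariant : ∀ i < j, 0 ≤ a i ∧ s * a i ≤ 2 * (i + 1) * a (i + 1) := by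
    intro i
    induction i with
    | zero => intro _; simp only [Nat.cast_zero, zero_add, ha₁]; constructor <;> nlinarith
    | succ m ih =>
      intro hm
      obtain ⟨ham, hstep⟩ := ih (by omega)
      have ham₁ : 0 ≤ a (m + 1) := by nlinarith [mul_nonneg hs ham]
      have hk : 4 * ((m : ℝ) + 1) * (ν - m) ≤ s ^ 2 := by
        have := hsq (m + 1) hm; push_cast at this; linarith
      have hdrop : 2 * (ν - m) * a m ≤ s * a (m + 1) := by
        have : 2 * ((m : ℝ) + 1) * (2 * (ν - m) * a m) ≤
            2 * ((m : ℝ) + 1) * (s * a (m + 1)) := by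
          nlinarith [mul_le_mul_of_nonneg_left hstep hs, mul_le_mul_of_nonneg_right hk ham]
        exact le_of_mul_le_mul_left this (by positivity)
      refine ⟨ham₁, ?_⟩
      push_cast
      linarith [hrec m]
  cases j with
  | zero => exact ha₀
  | succ i =>
    obtain ⟨hai, hstep⟩ := invariant i (by omega)
    have : 0 ≤ 2 * ((i : ℝ) + 1) * a (i + 1) := (mul_nonneg hs hai).trans hstep
    exact (mul_nonneg_iff_of_pos_left (by positivity)).1 this

theorem descPochhammer_eval_natCast_div_factorial {K : Type*} [Field K] [CharZero K] (w i : ℕ) :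
    (descPochhammer K i).eval (w : K) / i.factorial = w.choose i := by
  rw [descPochhammer_eval_eq_descFactorial, Nat.descFactorial_eq_factorial_mul_choose,
    Nat.cast_mul, mul_div_cancel_left₀ _ (Nat.cast_ne_zero.2 i.factorial_ne_zero)]

noncomputable def krawGen (n w : ℕ) : ℝ[X] := (1 - X) ^ w * (1 + X) ^ (n - w)

theorem one_sub_X_pow_eq_comp {R : Type*} [CommRing R] (w : ℕ) :
    (1 - X : R[X]) ^ w = ((1 + X) ^ w).comp (-X) := by
  simp [sub_eq_add_neg]

theorem krawF_eq_coeff_krawGen {n w : ℕ} (hw : w ≤ n) (j : ℕ) :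
    krawF n j w = (krawGen n w).coeff j := by
  rw [krawF, krawGen, one_sub_X_pow_eq_comp, coeff_mul,
    Finset.Nat.sum_antidiagonal_eq_sum_range_succ_mk]
  refine Finset.sum_congr rfl fun i _ => ?_
  rw [coeff_comp_neg_X, coeff_one_add_X_pow, coeff_one_add_X_pow, ← Nat.cast_sub hw,
    descPochhammer_eval_natCast_div_factorial, descPochhammer_eval_natCast_div_factorial]

theorem krawGen_comp_neg_X {n w : ℕ} (hw : w ≤ n) :
    (krawGen n w).comp (-X) = krawGen n (n - w) := by
  rw [krawGen, krawGen, Nat.sub_sub_self hw]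
  simp only [mul_comp, pow_comp, sub_comp, add_comp, one_comp, X_comp, sub_neg_eq_add]
  ring

theorem coeff_krawGen_sub_of_even {n w j : ℕ} (hw : w ≤ n) (hj : Even j) :
    (krawGen n (n - w)).coeff j = (krawGen n w).coeff j := by
  rw [← krawGen_comp_neg_X hw, coeff_comp_neg_X, hj.neg_one_pow, one_mul]

theorem krawGen_coeff_zero (n w : ℕ) : (krawGen n w).coeff 0 = 1 := by
  simp [krawGen, coeff_zero_eq_eval_zero]

theorem krawGen_ode {n w : ℕ} (hw : w ≤ n) :
    (1 - X ^ 2) * derivative (krawGen n w) =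
      (C ((n : ℝ) - 2 * w) - C (n : ℝ) * X) * krawGen n w := by
  have h₁ := mul_derivative_pow (1 - X : ℝ[X]) w
  have h₂ := mul_derivative_pow (1 + X : ℝ[X]) (n - w)
  simp only [derivative_sub, derivative_add, derivative_one, derivative_X, zero_sub, zero_add,
    mul_neg, mul_one] at h₁ h₂
  rw [Nat.cast_sub hw, map_sub] at h₂
  rw [krawGen, derivative_mul, map_sub, map_mul, map_ofNat]
  linear_combination (1 + X) * (1 + X) ^ (n - w) * h₁ + (1 - X) * (1 - X) ^ w * h₂

theorem krawGen_coeff_nonneg {n w j : ℕ} (hw : 2 * w ≤ n) (hj : 2 * j ≤ n + 3)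
    (hsq : 4 * ((j : ℝ) - 1) * (n - j + 2) ≤ ((n : ℝ) - 2 * w) ^ 2) :
    0 ≤ (krawGen n w).coeff j := by
  have hode := krawGen_ode (show w ≤ n by omega)
  have hs : (0 : ℝ) ≤ n - 2 * w := by
    rw [sub_nonneg]; exact_mod_cast hw
  refine nonneg_of_recurrence hs (by rw [krawGen_coeff_zero]; exact zero_le_one)
    (coeff_one_eq_of_ode hode) (coeff_add_two_of_ode hode) fun k hk => ?_
  have hk' : (k : ℝ) + 1 ≤ j := by exact_mod_cast hk
  have hj' : 2 * (j : ℝ) ≤ n + 3 := by exact_mod_cast hj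
  -- `k ↦ k (n + 1 - k)` increases up to `(n + 1) / 2 ≥ j - 1`
  nlinarith [mul_nonneg (sub_nonneg.2 hk') (by linarith : (0 : ℝ) ≤ n + 2 - j - k)]

theorem krawGen_eq_of_two_mul_le {n w : ℕ} (hw : 2 * w ≤ n) :
    krawGen n w = (1 - X ^ 2) ^ w * (1 + X) ^ (n - 2 * w) := by
  rw [krawGen, show n - w = w + (n - 2 * w) by omega, pow_add, ← mul_assoc, ← mul_pow]
  ring

theorem coeffDominated_krawGen {n w : ℕ} (hw : 2 * w ≤ n) :
    CoeffDominated (krawGen n w) ((1 + X ^ 2) ^ w * (1 + X) ^ (n - 2 * w)) := by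
  rw [krawGen_eq_of_two_mul_le hw]
  refine .mul (.pow (fun i => ?_) w) (.pow (.refl_of_coeff_nonneg fun i => ?_) _)
  · simp only [coeff_sub, coeff_add, coeff_one, coeff_X_pow]
    split_ifs <;> simp
  · simp only [coeff_add, coeff_one, coeff_X]
    split_ifs <;> norm_num

theorem abs_krawGen_coeff_le {n w : ℕ} (hw : 2 * w ≤ n) (j : ℕ) {r : ℝ} (hr : 0 < r) :
    |(krawGen n w).coeff j| ≤ Real.exp (w * r ^ 2 + (n - 2 * w) * r) / r ^ j := by
  rw [le_div_iff₀ (by positivity)]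
  refine ((coeffDominated_krawGen hw).abs_coeff_mul_pow_le_eval j hr.le).trans ?_
  have hcast : ((n - 2 * w : ℕ) : ℝ) = n - 2 * w := by push_cast [Nat.cast_sub hw]; ring
  rw [eval_mul, eval_pow, eval_pow, eval_add, eval_add, eval_one, eval_pow, eval_X, Real.exp_add,
    ← hcast, Real.exp_nat_mul, Real.exp_nat_mul]
  gcongr <;> linarith [Real.add_one_le_exp (r ^ 2), Real.add_one_le_exp r]

noncomputable def saddleRadius (α : ℝ) : ℝ := (√2 - 1) * √(α / (1 - α))

theorem saddleRadius_pos {α : ℝ} (h0 : 0 < α) (h1 : α < 1) : 0 < saddleRadius α :=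
  mul_pos (sub_pos.2 Real.one_lt_sqrt_two) (Real.sqrt_pos.2 (div_pos h0 (sub_pos.2 h1)))

theorem saddleRadius_sq {α : ℝ} (h0 : 0 ≤ α) (h1 : α < 1) :
    saddleRadius α ^ 2 = (3 - 2 * √2) * (α / (1 - α)) := by
  rw [saddleRadius, mul_pow, Real.sq_sqrt (div_nonneg h0 (sub_pos.2 h1).le)]
  congr 1
  linear_combination Real.sq_sqrt (zero_le_two : (0 : ℝ) ≤ 2)

theorem inv_saddleRadius {α : ℝ} (h0 : 0 < α) (h1 : α < 1) :
    (saddleRadius α)⁻¹ = (1 + √2) * √((1 - α) / α) := by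
  refine inv_eq_of_mul_eq_one_right ?_
  have hα : √(α / (1 - α)) * √((1 - α) / α) = 1 := by
    rw [← Real.sqrt_mul (div_nonneg h0.le (sub_pos.2 h1).le), div_mul_div_cancel₀', div_self,
      Real.sqrt_one]
    all_goals linarith
  rw [saddleRadius]
  linear_combination (√((1 - α) / α) * √(α / (1 - α))) * Real.sq_sqrt (zero_le_two : (0 : ℝ) ≤ 2)
    + hα

theorem saddle_exponent_le {α n j w : ℝ} (hα0 : 0 < α) (hα1 : α < 1 / 3) (hj : j = α * n)
    (hj1 : 1 ≤ j) (hw : 2 * w ≤ n) (hsq : (n - 2 * w) ^ 2 < 4 * (j - 1) * (n - j + 2)) :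
    w * saddleRadius α ^ 2 + (n - 2 * w) * saddleRadius α ≤ j + 1 := by
  set β := α / (1 - α) with hβ
  have hr : saddleRadius α ^ 2 = (3 - 2 * √2) * β := saddleRadius_sq hα0.le (by linarith)
  have hβ0 : 0 < β := div_pos hα0 (by linarith)
  have hβj : (n - j) * β = j := by
    have : 1 - α ≠ 0 := by linarith
    rw [hβ, hj]; field_simp
  have hβ2 : β ≤ 1 / 2 := by rw [hβ, div_le_iff₀ (by linarith)]; linarith
  have h2 := Real.sq_sqrt (zero_le_two : (0 : ℝ) ≤ 2)
  have hc : 0 ≤ 3 - 2 * √2 := by nlinarith [Real.sqrt_two_lt_three_halves]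
  have hsr : (n - 2 * w) * saddleRadius α ≤ (√2 - 1) * (2 * j + 1) := by
    refine le_of_sq_le_sq ?_ (mul_nonneg (by linarith [Real.one_lt_sqrt_two]) (by linarith))
    calc ((n - 2 * w) * saddleRadius α) ^ 2
        ≤ 4 * (j - 1) * (n - j + 2) * ((3 - 2 * √2) * β) := by
          rw [mul_pow, hr]; gcongr
      _ = (3 - 2 * √2) * (4 * (j - 1) * (j + 2 * β)) := by
          linear_combination (3 - 2 * √2) * 4 * (j - 1) * hβj
      _ ≤ (3 - 2 * √2) * (2 * j + 1) ^ 2 := by gcongr; nlinarith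
      _ = ((√2 - 1) * (2 * j + 1)) ^ 2 := by linear_combination (-(2 * j + 1) ^ 2) * h2
  have hwr : w * saddleRadius α ^ 2 ≤ (3 - 2 * √2) * (3 / 4 * j) := by
    rw [hr]; nlinarith [mul_le_mul_of_nonneg_left hβ2 (by linarith : (0 : ℝ) ≤ j)]
  nlinarith [Real.sqrt_two_lt_three_halves]

theorem neg_exp_mul_le_krawGen_coeff {α : ℝ} (hα0 : 0 < α) (hα1 : α < 1 / 3) {n j w : ℕ}
    (hj : (j : ℝ) = α * n) (hj1 : 1 ≤ j) (hw : 2 * w ≤ n) :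
    -Real.exp 1 * (Real.exp 1 * (saddleRadius α)⁻¹) ^ j ≤ (krawGen n w).coeff j := by
  have hr := saddleRadius_pos hα0 (by linarith)
  by_cases hsq : 4 * ((j : ℝ) - 1) * (n - j + 2) ≤ ((n : ℝ) - 2 * w) ^ 2
  · have hjn : 2 * j ≤ n + 3 := by
      have : 2 * (j : ℝ) ≤ n := by nlinarith [(Nat.cast_nonneg n : (0 : ℝ) ≤ n)]
      have : 2 * j ≤ n := by exact_mod_cast this
      omega
    have : 0 ≤ Real.exp 1 * (Real.exp 1 * (saddleRadius α)⁻¹) ^ j := by positivity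
    linarith [krawGen_coeff_nonneg hw hjn hsq]
  · have hw' : 2 * (w : ℝ) ≤ n := by exact_mod_cast hw
    calc -Real.exp 1 * (Real.exp 1 * (saddleRadius α)⁻¹) ^ j
        = -(Real.exp (j + 1) / saddleRadius α ^ j) := by
          rw [Real.exp_add, ← Real.exp_one_pow, mul_pow, div_eq_mul_inv, inv_pow]; ring
      _ ≤ -(Real.exp (w * saddleRadius α ^ 2 + (n - 2 * w) * saddleRadius α) /
            saddleRadius α ^ j) := by
          gcongr -(Real.exp ?_ / _)
          exact saddle_exponent_le hα0 hα1 hj (by exact_mod_cast hj1) hw' (not_le.1 hsq)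
      _ ≤ (krawGen n w).coeff j := neg_le_of_abs_le (abs_krawGen_coeff_le hw j hr)

theorem kraw_lower_bound_linear_j (α : ℝ) (hα0 : 0 < α) (hα1 : α < 1 / 3) :
    ∃ C : ℝ, 0 < C ∧ ∃ N : ℕ, ∀ n : ℕ, N ≤ n → ∀ j : ℕ,
      (j : ℝ) = α * (n : ℝ) → Even j → 0 < j → ∀ w : ℕ, w ≤ n →
      krawF n j (w : ℝ) ≥
        -C * (Real.exp 1 * (1 + Real.sqrt 2) * Real.sqrt ((1 - α) / α))
          ^ (α * (n : ℝ)) := by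
  refine ⟨Real.exp 1, Real.exp_pos 1, 0, fun n _ j hj hj_even hj0 w hw => ?_⟩
  rw [ge_iff_le, ← hj, Real.rpow_natCast, mul_assoc (Real.exp 1),
    ← inv_saddleRadius hα0 (by linarith), krawF_eq_coeff_krawGen hw]
  rcases le_total (2 * w) n with h2w | h2w
  · exact neg_exp_mul_le_krawGen_coeff hα0 hα1 hj hj0 h2w
  · rw [← coeff_krawGen_sub_of_even hw hj_even]
    exact neg_exp_mul_le_krawGen_coeff hα0 hα1 hj hj0 (by omega)
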